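/- arXiv:2511.19665 — 3 statements merged into one kernel-verified Lean document; each statement's English description precedes it below -/
import Mathlib

section
/- (Functorial calculus of finite differences.) Let (A, D, act, add, e) be a strict change action in Cat, let G be an abelian group, and let F : A ⥤ Arr(G) be a functor. Then F is change-action differentiable with respect to the subtraction change action on Arr(G): there exists a functor ∂F : A × D ⥤ Arr(G), given on objects by ∂F(A, α) = F(A) − F(act(A, α)) and on morphisms by componentwise differences, such that: (CAD1) for every object (A, α) of A × D, F(act(A, α)) = F(A) − ∂F(A, α), and for every morphism (f, φ) of A × D, each component of F(act(f, φ)) equals the corresponding component of F(f) minus that of ∂F(f, φ); (CAD2, first part) for all objects A of A and α, β of D, ∂F(A, add(α, β)) = ∂F(A, α) + ∂F(act(A, α), β), and the corresponding componentwise equation holds for morphisms; (CAD2, second part) ∂F(A, e) = 0 for every object A, and both components of ∂F(f, id_e) are 0 for every morphism f of A. -/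
/-!
`∂F` is the pairing of `F ∘ fst` and `F ∘ act` followed by the subtraction functor, so it is a
functor for free. CAD1 is `x - (x - y) = y`; CAD2 telescopes `(x - y) + (y - z) = x - z` along
`act(act(A, α), β) = act(A, α + β)`, and vanishes at `e` because `act(A, e) = A`. On morphisms the
strict action laws are heterogeneous equalities, which `F` turns into equal components once the
endpoints are identified.
-/

open CategoryTheory

/-- Objects of the arrow category `Arr(G)` of the delooping of the abelian group `G`:
elements of `G` (morphisms of `BG`). -/
abbrev Arr (G : Type*) [AddCommGroup G] : Type _ := G

/-- The arrow category of the delooping of `G`: a morphism from `a` to `b` is a pair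
`(f, g)` of elements of `G` with `f + b = a + g` (a commuting square in `BG`);
composition is componentwise addition and the identity is `(0, 0)`. -/
instance arrCategory (G : Type*) [AddCommGroup G] : Category (Arr G) where
  Hom a b := {p : G × G // p.1 + b = a + p.2}
  id a := ⟨(0, 0), by abel⟩
  comp {a b c} f g := ⟨(f.1.1 + g.1.1, f.1.2 + g.1.2), by
    have h1 := f.2
    have h2 := g.2
    calc f.1.1 + g.1.1 + c = f.1.1 + (g.1.1 + c) := by abel
      _ = f.1.1 + (b + g.1.2) := by rw [h2]
      _ = f.1.1 + b + g.1.2 := by abel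
      _ = a + f.1.2 + g.1.2 := by rw [h1]
      _ = a + (f.1.2 + g.1.2) := by abel⟩
  id_comp f := by apply Subtype.ext; simp
  comp_id f := by apply Subtype.ext; simp
  assoc f g h := by apply Subtype.ext; simp [add_assoc]


namespace Arr

variable {G : Type*} [AddCommGroup G]

@[ext]
lemma hom_ext {a b : Arr G} {u v : a ⟶ b} (h : u.1 = v.1) : u = v :=
  Subtype.ext h

variable (G) in
def sub : Arr G × Arr G ⥤ Arr G where
  obj p := p.1 - p.2
  map {p q} u := ⟨u.1.1 - u.2.1, by
    have h₁ := u.1.2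
    have h₂ := u.2.2
    calc u.1.1.1 - u.2.1.1 + (q.1 - q.2) = (u.1.1.1 + q.1) - (u.2.1.1 + q.2) := by abel
      _ = (p.1 + u.1.1.2) - (p.2 + u.2.1.2) := by rw [h₁, h₂]
      _ = p.1 - p.2 + (u.1.1.2 - u.2.1.2) := by abel⟩
  map_id _ := hom_ext (sub_zero _)
  map_comp u v := hom_ext (add_sub_add_comm _ _ _ _)

lemma val_map_eq_of_heq {C : Type*} [Category C] (F : C ⥤ Arr G) {x x' y y' : C}
    (hx : x = x') (hy : y = y') {u : x ⟶ y} {v : x' ⟶ y'} (h : HEq u v) :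
    (F.map u).1 = (F.map v).1 := by
  subst hx hy
  cases h
  rfl

end Arr

section FiniteDifference

variable {G : Type*} [AddCommGroup G] {A D : Type*} [Category A] [Category D]
  (act : A × D ⥤ A) (F : A ⥤ Arr G)

/-- `∂F(A, α) = F(A) − F(act(A, α))`. -/
def finiteDifference : A × D ⥤ Arr G :=
  (CategoryTheory.Prod.fst A D ⋙ F).prod' (act ⋙ F) ⋙ Arr.sub G

lemma finiteDifference_obj (p : A × D) :
    (finiteDifference act F).obj p = F.obj p.1 - F.obj (act.obj p) := rfl

lemma finiteDifference_map_val {p q : A × D} (φ : p ⟶ q) :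
    ((finiteDifference act F).map φ).1 = (F.map φ.1).1 - (F.map (act.map φ)).1 := rfl

lemma obj_act_eq_sub_finiteDifference_obj (p : A × D) :
    F.obj (act.obj p) = F.obj p.1 - (finiteDifference act F).obj p :=
  (sub_sub_self _ _).symm

lemma val_map_act_eq_sub_finiteDifference_map {p q : A × D} (φ : p ⟶ q) :
    (F.map (act.map φ)).1 = (F.map φ.1).1 - ((finiteDifference act F).map φ).1 :=
  (sub_sub_self _ _).symm

lemma finiteDifference_obj_of_act_act {a : A} {α β γ : D}
    (h : act.obj (act.obj (a, α), β) = act.obj (a, γ)) :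
    (finiteDifference act F).obj (a, γ)
      = (finiteDifference act F).obj (a, α)
        + (finiteDifference act F).obj (act.obj (a, α), β) := by
  simp only [finiteDifference_obj, h, sub_add_sub_cancel]

lemma finiteDifference_map_val_of_act_act {a b : A} {α α' β β' γ γ' : D}
    (f : a ⟶ b) (φ : α ⟶ α') (ψ : β ⟶ β') (χ : γ ⟶ γ')
    (hsrc : act.obj (act.obj (a, α), β) = act.obj (a, γ))
    (htgt : act.obj (act.obj (b, α'), β') = act.obj (b, γ'))
    (h : HEq (act.map ((act.map ((f, φ) : ((a, α) : A × D) ⟶ (b, α')), ψ)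
            : ((act.obj (a, α), β) : A × D) ⟶ (act.obj (b, α'), β')))
          (act.map ((f, χ) : ((a, γ) : A × D) ⟶ (b, γ')))) :
    ((finiteDifference act F).map ((f, χ) : ((a, γ) : A × D) ⟶ (b, γ'))).1
      = ((finiteDifference act F).map ((f, φ) : ((a, α) : A × D) ⟶ (b, α'))).1
        + ((finiteDifference act F).map ((act.map ((f, φ) : ((a, α) : A × D) ⟶ (b, α')), ψ)
            : ((act.obj (a, α), β) : A × D) ⟶ (act.obj (b, α'), β'))).1 := by
  simp only [finiteDifference_map_val, ← Arr.val_map_eq_of_heq F hsrc htgt h,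
    sub_add_sub_cancel]

lemma finiteDifference_obj_eq_zero {a : A} {ε : D} (h : act.obj (a, ε) = a) :
    (finiteDifference act F).obj (a, ε) = 0 := by
  rw [finiteDifference_obj, h, sub_self]

lemma finiteDifference_map_val_eq_zero {a b : A} {ε : D} (f : a ⟶ b)
    (ha : act.obj (a, ε) = a) (hb : act.obj (b, ε) = b)
    (h : HEq (act.map ((f, 𝟙 ε) : ((a, ε) : A × D) ⟶ (b, ε))) f) :
    ((finiteDifference act F).map ((f, 𝟙 ε) : ((a, ε) : A × D) ⟶ (b, ε))).1 = 0 := by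
  rw [finiteDifference_map_val, Arr.val_map_eq_of_heq F ha hb h, sub_self]

end FiniteDifference

theorem functorial_finite_differences_general (G : Type) [AddCommGroup G]
    (A D : Type) [Category A] [Category D]
    (act : A × D ⥤ A) (add : D × D ⥤ D) (e : D)
    -- strict action laws on objects
    (hacte : ∀ a : A, act.obj (a, e) = a)
    (hactcomp : ∀ (a : A) (α β : D),
      act.obj (act.obj (a, α), β) = act.obj (a, add.obj (α, β)))
    -- strict action laws on morphisms
    (hactem : ∀ {a b : A} (f : a ⟶ b),
      HEq (act.map ((f, 𝟙 e) : ((a, e) : A × D) ⟶ (b, e))) f)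
    (hactcompm : ∀ {a b : A} {α α' β β' : D} (f : a ⟶ b) (φ : α ⟶ α') (ψ : β ⟶ β'),
      HEq (act.map ((act.map ((f, φ) : ((a, α) : A × D) ⟶ (b, α')), ψ)
            : ((act.obj (a, α), β) : A × D) ⟶ (act.obj (b, α'), β')))
          (act.map ((f, add.map ((φ, ψ) : ((α, β) : D × D) ⟶ (α', β')))
            : ((a, add.obj (α, β)) : A × D) ⟶ (b, add.obj (α', β')))))
    (F : A ⥤ Arr G) :
    ∃ dF : (A × D) ⥤ Arr G,
      -- `∂F` on objects and morphisms
      (∀ p : A × D, dF.obj p = F.obj p.1 - F.obj (act.obj p)) ∧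
      (∀ {p q : A × D} (φ : p ⟶ q),
        (dF.map φ).1
          = ((F.map φ.1).1.1 - (F.map (act.map φ)).1.1,
             (F.map φ.1).1.2 - (F.map (act.map φ)).1.2)) ∧
      -- CAD1 on objects: F(act(A, α)) = F(A) − ∂F(A, α)
      (∀ (a : A) (α : D), F.obj (act.obj (a, α)) = F.obj a - dF.obj (a, α)) ∧
      -- CAD1 on morphisms, componentwise
      (∀ {p q : A × D} (φ : p ⟶ q),
        (F.map (act.map φ)).1
          = ((F.map φ.1).1.1 - (dF.map φ).1.1,
             (F.map φ.1).1.2 - (dF.map φ).1.2)) ∧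
      -- CAD2, first part, on objects
      (∀ (a : A) (α β : D),
        dF.obj (a, add.obj (α, β)) = dF.obj (a, α) + dF.obj (act.obj (a, α), β)) ∧
      -- CAD2, first part, on morphisms, componentwise
      (∀ {a b : A} {α α' β β' : D} (f : a ⟶ b) (φ : α ⟶ α') (ψ : β ⟶ β'),
        (dF.map ((f, add.map ((φ, ψ) : ((α, β) : D × D) ⟶ (α', β')))
            : ((a, add.obj (α, β)) : A × D) ⟶ (b, add.obj (α', β')))).1
          = ((dF.map ((f, φ) : ((a, α) : A × D) ⟶ (b, α'))).1.1
              + (dF.map ((act.map ((f, φ) : ((a, α) : A × D) ⟶ (b, α')), ψ)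
                  : ((act.obj (a, α), β) : A × D) ⟶ (act.obj (b, α'), β'))).1.1,
             (dF.map ((f, φ) : ((a, α) : A × D) ⟶ (b, α'))).1.2
              + (dF.map ((act.map ((f, φ) : ((a, α) : A × D) ⟶ (b, α')), ψ)
                  : ((act.obj (a, α), β) : A × D) ⟶ (act.obj (b, α'), β'))).1.2)) ∧
      -- CAD2, second part
      (∀ a : A, dF.obj (a, e) = 0) ∧
      (∀ {a b : A} (f : a ⟶ b),
        (dF.map ((f, 𝟙 e) : ((a, e) : A × D) ⟶ (b, e))).1 = ((0 : G), (0 : G))) := by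
  refine ⟨finiteDifference act F, fun _ => rfl, fun _ => rfl,
    fun a α => obj_act_eq_sub_finiteDifference_obj act F (a, α),
    fun φ => val_map_act_eq_sub_finiteDifference_map act F φ,
    fun a α β => finiteDifference_obj_of_act_act act F (hactcomp a α β),
    fun f φ ψ => finiteDifference_map_val_of_act_act act F f φ ψ _
      (hactcomp _ _ _) (hactcomp _ _ _) (hactcompm f φ ψ),
    fun a => finiteDifference_obj_eq_zero act F (hacte a),
    fun f => finiteDifference_map_val_eq_zero act F f (hacte _) (hacte _) (hactem f)⟩

/-- **Functorial calculus of finite differences.** Given a strict change action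
`(A, D, act, add, e)` in `Cat` and a functor `F : A ⥤ Arr(G)`, the finite difference
`∂F(A, α) = F(A) − F(act(A, α))` is a change-action derivative of `F` with respect to
the subtraction change action `(Arr(G), Arr(G), −, +, 0)`: it satisfies CAD1 and CAD2. -/
theorem functorial_finite_differences (G : Type) [AddCommGroup G]
    (A D : Type) [Category A] [Category D]
    (act : A × D ⥤ A) (add : D × D ⥤ D) (e : D)
    -- strict monoid laws on objects
    (hunit₁ : ∀ α : D, add.obj (α, e) = α)
    (hunit₂ : ∀ α : D, add.obj (e, α) = α)
    (hassoc : ∀ α β γ : D, add.obj (add.obj (α, β), γ) = add.obj (α, add.obj (β, γ)))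
    -- strict monoid laws on morphisms
    (hunit₁m : ∀ {α β : D} (φ : α ⟶ β),
      HEq (add.map ((φ, 𝟙 e) : ((α, e) : D × D) ⟶ (β, e))) φ)
    (hunit₂m : ∀ {α β : D} (φ : α ⟶ β),
      HEq (add.map ((𝟙 e, φ) : ((e, α) : D × D) ⟶ (e, β))) φ)
    (hassocm : ∀ {α α' β β' γ γ' : D} (φ : α ⟶ α') (ψ : β ⟶ β') (χ : γ ⟶ γ'),
      HEq (add.map ((add.map ((φ, ψ) : ((α, β) : D × D) ⟶ (α', β')), χ)
            : ((add.obj (α, β), γ) : D × D) ⟶ (add.obj (α', β'), γ')))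
          (add.map ((φ, add.map ((ψ, χ) : ((β, γ) : D × D) ⟶ (β', γ')))
            : ((α, add.obj (β, γ)) : D × D) ⟶ (α', add.obj (β', γ')))))
    -- strict action laws on objects
    (hacte : ∀ a : A, act.obj (a, e) = a)
    (hactcomp : ∀ (a : A) (α β : D),
      act.obj (act.obj (a, α), β) = act.obj (a, add.obj (α, β)))
    -- strict action laws on morphisms
    (hactem : ∀ {a b : A} (f : a ⟶ b),
      HEq (act.map ((f, 𝟙 e) : ((a, e) : A × D) ⟶ (b, e))) f)
    (hactcompm : ∀ {a b : A} {α α' β β' : D} (f : a ⟶ b) (φ : α ⟶ α') (ψ : β ⟶ β'),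
      HEq (act.map ((act.map ((f, φ) : ((a, α) : A × D) ⟶ (b, α')), ψ)
            : ((act.obj (a, α), β) : A × D) ⟶ (act.obj (b, α'), β')))
          (act.map ((f, add.map ((φ, ψ) : ((α, β) : D × D) ⟶ (α', β')))
            : ((a, add.obj (α, β)) : A × D) ⟶ (b, add.obj (α', β')))))
    (F : A ⥤ Arr G) :
    ∃ dF : (A × D) ⥤ Arr G,
      -- `∂F` on objects and morphisms
      (∀ p : A × D, dF.obj p = F.obj p.1 - F.obj (act.obj p)) ∧
      (∀ {p q : A × D} (φ : p ⟶ q),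
        (dF.map φ).1
          = ((F.map φ.1).1.1 - (F.map (act.map φ)).1.1,
             (F.map φ.1).1.2 - (F.map (act.map φ)).1.2)) ∧
      -- CAD1 on objects: F(act(A, α)) = F(A) − ∂F(A, α)
      (∀ (a : A) (α : D), F.obj (act.obj (a, α)) = F.obj a - dF.obj (a, α)) ∧
      -- CAD1 on morphisms, componentwise
      (∀ {p q : A × D} (φ : p ⟶ q),
        (F.map (act.map φ)).1
          = ((F.map φ.1).1.1 - (dF.map φ).1.1,
             (F.map φ.1).1.2 - (dF.map φ).1.2)) ∧
      -- CAD2, first part, on objects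
      (∀ (a : A) (α β : D),
        dF.obj (a, add.obj (α, β)) = dF.obj (a, α) + dF.obj (act.obj (a, α), β)) ∧
      -- CAD2, first part, on morphisms, componentwise
      (∀ {a b : A} {α α' β β' : D} (f : a ⟶ b) (φ : α ⟶ α') (ψ : β ⟶ β'),
        (dF.map ((f, add.map ((φ, ψ) : ((α, β) : D × D) ⟶ (α', β')))
            : ((a, add.obj (α, β)) : A × D) ⟶ (b, add.obj (α', β')))).1
          = ((dF.map ((f, φ) : ((a, α) : A × D) ⟶ (b, α'))).1.1
              + (dF.map ((act.map ((f, φ) : ((a, α) : A × D) ⟶ (b, α')), ψ)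
                  : ((act.obj (a, α), β) : A × D) ⟶ (act.obj (b, α'), β'))).1.1,
             (dF.map ((f, φ) : ((a, α) : A × D) ⟶ (b, α'))).1.2
              + (dF.map ((act.map ((f, φ) : ((a, α) : A × D) ⟶ (b, α')), ψ)
                  : ((act.obj (a, α), β) : A × D) ⟶ (act.obj (b, α'), β'))).1.2)) ∧
      -- CAD2, second part
      (∀ a : A, dF.obj (a, e) = 0) ∧
      (∀ {a b : A} (f : a ⟶ b),
        (dF.map ((f, 𝟙 e) : ((a, e) : A × D) ⟶ (b, e))).1 = ((0 : G), (0 : G))) :=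
  functorial_finite_differences_general G A D act add e hacte hactcomp hactem hactcompm F
end

section
/- Not every monotone function ℕ → ℕ is change-action differentiable in the category of posets. Precisely: let k, ℓ be natural numbers with 2 ≤ k ≤ ℓ, and define g : ℕ → ℕ by g(x) = x + 1 if x ≤ k − 1, g(x) = k if k ≤ x ≤ ℓ, and g(x) = k + x − ℓ + 1 if x ≥ ℓ + 1. Then g is monotone, but there exists no function h : ℕ × ℕ → ℕ that is monotone with respect to the product order on ℕ × ℕ and satisfies g(a + b) = g(a) + h(a, b) for all a, b ∈ ℕ. -/
/-- Not every monotone function `ℕ → ℕ` is change-action differentiable in the category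
of posets: the staircase function `g` below is monotone, but no monotone
`h : ℕ × ℕ → ℕ` (with respect to the product order) satisfies the CAD1 equation
`g (a + b) = g a + h (a, b)`. -/
theorem not_all_monotone_maps_differentiable (k l : ℕ) (hk : 2 ≤ k) (hkl : k ≤ l)
    (g : ℕ → ℕ)
    (hg : ∀ x, g x = if x ≤ k - 1 then x + 1 else if x ≤ l then k else k + x - l + 1) :
    Monotone g ∧
      ¬ ∃ h : ℕ × ℕ → ℕ, Monotone h ∧ ∀ a b : ℕ, g (a + b) = g a + h (a, b) := by
  constructor
  · apply monotone_nat_of_le_succ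
    intro n
    rw [hg n, hg (n + 1)]
    split_ifs <;> omega
  · rintro ⟨h, hmono, heq⟩
    have h1 := heq 0 1
    have h2 := heq (k - 1) 1
    have hk1 : k - 1 + 1 = k := by omega
    rw [hk1] at h2
    rw [hg 1, hg 0] at h1
    rw [hg k, hg (k - 1)] at h2
    have hm : h (0, 1) ≤ h (k - 1, 1) := hmono ⟨by omega, le_refl _⟩
    split_ifs at h1 h2 <;> omega
end

section
/- Let P be a finite partial order. For all natural numbers n ≥ m, all x ≤ x' in P, and every y ∈ c n x (a degree-n blanket of x), there exists y' ∈ c m x' (a degree-m blanket of x') with y ≤ y'. -/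
/-- The set of degree-`n` blankets of `x`: `c 0 x = {x}` and
`c (n+1) x = {y | ∃ w ∈ c n x, y ⋖ w}`, where `y ⋖ w` means `w` covers `y`
(`y < w` with nothing strictly in between). -/
def blankets {P : Type*} [PartialOrder P] : ℕ → P → Set P
  | 0, x => {x}
  | n + 1, x => {y | ∃ w ∈ blankets n x, y ⋖ w}

/-- Any degree-`n` blanket of `x` is `≤ x`. -/
lemma blankets_le {P : Type*} [PartialOrder P] {n : ℕ} {x y : P}
    (hy : y ∈ blankets n x) : y ≤ x := by
  induction n generalizing y with
  | zero => exact hy.le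
  | succ n ih =>
    obtain ⟨w, hw, hcov⟩ := hy
    exact hcov.le.trans (ih hw)

/-- Decreasing the degree: from a degree-`n` blanket we can go up to a degree-`m`
blanket of the same `x`, for `m ≤ n`. -/
lemma blankets_up {P : Type*} [PartialOrder P] {n m : ℕ} (hnm : m ≤ n) {x y : P}
    (hy : y ∈ blankets n x) : ∃ z ∈ blankets m x, y ≤ z := by
  induction n generalizing y with
  | zero => exact ⟨y, (Nat.le_zero.mp hnm) ▸ hy, le_rfl⟩
  | succ n ih =>
    rcases Nat.eq_or_lt_of_le hnm with h | h
    · exact ⟨y, h ▸ hy, le_rfl⟩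
    · obtain ⟨w, hw, hcov⟩ := hy
      obtain ⟨z, hz, hwz⟩ := ih (Nat.lt_succ_iff.mp h) hw
      exact ⟨z, hz, hcov.le.trans hwz⟩

/-- Monotone comparison at equal degree, in a finite partial order. -/
lemma blankets_mono {P : Type*} [Fintype P] [PartialOrder P] {m : ℕ} {x x' : P}
    (hxx' : x ≤ x') {y : P} (hy : y ∈ blankets m x) :
    ∃ y' ∈ blankets m x', y ≤ y' := by
  induction m generalizing y with
  | zero => exact ⟨x', rfl, hy.le.trans hxx'⟩
  | succ m ih =>
    obtain ⟨w, hw, hcov⟩ := hy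
    obtain ⟨w', hw', hww'⟩ := ih hw
    have hlt : y < w' := lt_of_lt_of_le hcov.lt hww'
    obtain ⟨y', hyy', hy'cov⟩ := exists_le_covBy_of_lt hlt
    exact ⟨y', ⟨w', hw', hy'cov⟩, hyy'⟩

/-- In a finite partial order, for `n ≥ m`, `x ≤ x'`, and any degree-`n` blanket `y` of
`x`, there is a degree-`m` blanket `y'` of `x'` with `y ≤ y'`. -/
theorem blanket_comparison {P : Type*} [Fintype P] [PartialOrder P]
    (n m : ℕ) (hnm : m ≤ n) (x x' : P) (hxx' : x ≤ x')
    (y : P) (hy : y ∈ blankets n x) :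
    ∃ y' ∈ blankets m x', y ≤ y' := by
  obtain ⟨z, hz, hyz⟩ := blankets_up hnm hy
  obtain ⟨y', hy', hzy'⟩ := blankets_mono hxx' hz
  exact ⟨y', hy', hyz.trans hzy'⟩
end
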